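/- Let t₁, …, t_k ∈ (0,1) with 1, t₁, …, t_k linearly independent over ℚ, and let z₀ ∈ (0,1), φ = 1/2 + z₀/2, z_n(t) = 2|frac(n t + φ) − 1/2|. Then z_n(0) = z₀ for every n, and for any prescribed heights h₁, …, h_k ∈ (0,1) and ε > 0 there exists n ∈ ℕ with |z_n(t_i) − h_i| < ε for all i. -/

import Mathlib

/-!
Write `2 |fract x - 1/2| = 1 - 2 ‖x‖` with `‖x‖` the distance from `x` to `ℤ`, a 1-Lipschitz
function of `x mod 1`; it then suffices to move all `n tᵢ` simultaneously close to prescribed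
points mod 1, which is Kronecker's theorem.

Kronecker's theorem is proved on the unit circle: given multiplicatively independent `zᵢ` and
targets `wᵢ`, average over `n` the kernel `∏ᵢ cos²ᴹ(θᵢ / 2)`, `θᵢ` the angle of `zᵢⁿ / wᵢ`.
Expanding it into characters, independence kills every non-constant term in the Cesàro mean,
which therefore tends to `(C(2M, M) / 4ᴹ)ᵏ ≥ (2M + 1)⁻ᵏ`. If every `n` had a coordinate at
distance `≥ ε` from its target, the kernel would be at most `(1 - ε² / 4)ᴹ` everywhere, which is
smaller for large `M`.
-/

open Filter Finset Topology Real FourierTransform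

lemma tendsto_average_pow {z : ℂ} (hz : ‖z‖ = 1) :
    Tendsto (fun N : ℕ => (∑ n ∈ range N, z ^ n) / N) atTop (𝓝 (if z = 1 then 1 else 0)) := by
  split_ifs with h1
  · subst h1
    refine tendsto_const_nhds.congr' ?_
    filter_upwards [eventually_ne_atTop 0] with N hN
    simp [hN]
  · have hbound : ∀ N : ℕ, ‖(∑ n ∈ range N, z ^ n) / N‖ ≤ 2 / ‖z - 1‖ * (1 / N) := by
      intro N
      have hgeom : ‖∑ n ∈ range N, z ^ n‖ ≤ 2 / ‖z - 1‖ := by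
        rw [geom_sum_eq h1, norm_div]
        gcongr
        calc ‖z ^ N - 1‖ ≤ ‖z ^ N‖ + ‖(1 : ℂ)‖ := norm_sub_le _ _
          _ = 2 := by rw [norm_pow, hz]; norm_num
      rw [norm_div, Complex.norm_natCast, div_eq_mul_one_div]
      gcongr
    refine squeeze_zero_norm hbound ?_
    simpa using (tendsto_one_div_atTop_nhds_zero_nat (𝕜 := ℝ)).const_mul (2 / ‖z - 1‖)

lemma tendsto_average_sum_pow {G : Type*} (s : Finset G) (c ζ : G → ℂ)
    (hζ : ∀ g ∈ s, ‖ζ g‖ = 1) :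
    Tendsto (fun N : ℕ => (∑ n ∈ range N, ∑ g ∈ s, c g * ζ g ^ n) / N) atTop
      (𝓝 (∑ g ∈ s with ζ g = 1, c g)) := by
  have hswap : ∀ N : ℕ, (∑ n ∈ range N, ∑ g ∈ s, c g * ζ g ^ n) / N
      = ∑ g ∈ s, c g * ((∑ n ∈ range N, ζ g ^ n) / N) := fun N => by
    rw [Finset.sum_comm, Finset.sum_div]
    simp only [← Finset.mul_sum, mul_div_assoc]
  have hterms := tendsto_finsetSum s fun g hg => (tendsto_average_pow (hζ g hg)).const_mul (c g)
  simp only [mul_ite, mul_one, mul_zero, ← Finset.sum_filter, ← hswap] at hterms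
  exact hterms

lemma norm_average_le {𝕜 : Type*} [RCLike 𝕜] {f : ℕ → 𝕜} {B : ℝ} (hB : 0 ≤ B)
    (hf : ∀ n, ‖f n‖ ≤ B) (N : ℕ) : ‖(∑ n ∈ range N, f n) / N‖ ≤ B := by
  rcases N.eq_zero_or_pos with rfl | hN
  · simpa using hB
  rw [norm_div, RCLike.norm_natCast, div_le_iff₀ (by exact_mod_cast hN)]
  calc ‖∑ n ∈ range N, f n‖ ≤ ∑ n ∈ range N, B := norm_sum_le_of_le _ fun n _ => hf n
    _ = B * N := by rw [sum_const, card_range, nsmul_eq_mul, mul_comm]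

lemma exists_four_pow_mul_pow_lt_centralBinom_pow {ρ : ℝ} (hρ0 : 0 ≤ ρ) (hρ1 : ρ < 1) (k : ℕ) :
    ∃ M : ℕ, ((4 : ℝ) ^ M) ^ k * ρ ^ M < (Nat.centralBinom M : ℝ) ^ k := by
  have hsmall : ∀ᶠ M : ℕ in atTop, ((2 * M + 1 : ℕ) : ℝ) ^ k * ρ ^ M < 1 := by
    have hpoly := (tendsto_pow_const_mul_const_pow_of_abs_lt_one k
      (abs_lt.2 ⟨by linarith, hρ1⟩)).const_mul ((3 : ℝ) ^ k)
    rw [mul_zero] at hpoly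
    filter_upwards [hpoly.eventually (gt_mem_nhds one_pos), eventually_ge_atTop 1] with M hM hM1
    refine lt_of_le_of_lt ?_ hM
    rw [← mul_assoc, ← mul_pow]
    gcongr
    push_cast
    have : (1 : ℝ) ≤ M := by exact_mod_cast hM1
    linarith
  obtain ⟨M, hM⟩ := hsmall.exists
  refine ⟨M, ?_⟩
  have hC : (0 : ℝ) < (Nat.centralBinom M : ℝ) ^ k := by
    have := Nat.centralBinom_pos M
    positivity
  calc ((4 : ℝ) ^ M) ^ k * ρ ^ M
      ≤ (((2 * M + 1 : ℕ) : ℝ) * Nat.centralBinom M) ^ k * ρ ^ M := by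
        gcongr
        exact_mod_cast Nat.four_pow_le_two_mul_add_one_mul_central_binom M
    _ = (((2 * M + 1 : ℕ) : ℝ) ^ k * ρ ^ M) * (Nat.centralBinom M : ℝ) ^ k := by ring
    _ < (Nat.centralBinom M : ℝ) ^ k := mul_lt_of_lt_one_left hC hM

/-- For `x = exp (i θ)` this is `cos² (θ / 2) = (1 + cos θ) / 2`. -/
noncomputable def raisedCosine (x : ℂ) : ℂ := (x + 1) ^ 2 * x⁻¹ / 4

lemma norm_raisedCosine (x : Circle) : ‖raisedCosine x‖ = 1 - ‖(x : ℂ) - 1‖ ^ 2 / 4 := by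
  have hpar := parallelogram_law_with_norm ℝ (x : ℂ) 1
  rw [Circle.norm_coe, norm_one] at hpar
  rw [raisedCosine, norm_div, norm_mul, norm_pow, norm_inv, Circle.norm_coe]
  norm_num
  linarith

lemma four_pow_mul_raisedCosine_pow {x : ℂ} (hx : x ≠ 0) (M : ℕ) :
    4 ^ M * raisedCosine x ^ M
      = ∑ j ∈ range (2 * M + 1), ((2 * M).choose j : ℂ) * x ^ ((j : ℤ) - M) := by
  have hpow : 4 ^ M * raisedCosine x ^ M = (x + 1) ^ (2 * M) * (x ^ M)⁻¹ := by
    rw [raisedCosine, ← mul_pow, pow_mul, ← inv_pow, ← mul_pow]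
    congr 1
    field_simp
  rw [hpow, add_pow, Finset.sum_mul]
  refine Finset.sum_congr rfl fun j _ => ?_
  rw [zpow_sub₀ hx, zpow_natCast, zpow_natCast, one_pow, mul_one]
  ring

lemma norm_prod_raisedCosine_pow_le {ι : Type*} [Fintype ι] (x : ι → Circle) {ε : ℝ}
    {i₀ : ι} (hi₀ : ε ≤ ‖(x i₀ : ℂ) - 1‖) (hε : 0 ≤ ε) (M : ℕ) :
    ‖∏ i, raisedCosine (x i) ^ M‖ ≤ (1 - ε ^ 2 / 4) ^ M := by
  have hle : ∀ i, ‖raisedCosine (x i)‖ ≤ 1 := fun i => by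
    rw [norm_raisedCosine]; have := norm_nonneg ((x i : ℂ) - 1); nlinarith
  classical
  rw [norm_prod, ← Finset.mul_prod_erase _ _ (mem_univ i₀)]
  calc ‖raisedCosine (x i₀) ^ M‖ * ∏ i ∈ univ.erase i₀, ‖raisedCosine (x i) ^ M‖
      ≤ ‖raisedCosine (x i₀) ^ M‖ * 1 := by
        gcongr
        exact Finset.prod_le_one (fun _ _ => norm_nonneg _)
          fun i _ => by rw [norm_pow]; exact pow_le_one₀ (norm_nonneg _) (hle i)
    _ ≤ (1 - ε ^ 2 / 4) ^ M := by
        rw [mul_one, norm_pow]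
        gcongr
        rw [norm_raisedCosine]
        gcongr

lemma prod_four_pow_mul_raisedCosine_pow {ι : Type*} [Fintype ι] [DecidableEq ι]
    (z w : ι → Circle) (M n : ℕ) :
    ∏ i, (4 ^ M * raisedCosine ↑(z i ^ n / w i) ^ M)
      = ∑ g ∈ Fintype.piFinset fun _ : ι => range (2 * M + 1),
          (∏ i, ((2 * M).choose (g i) : ℂ) * ↑((w i ^ ((g i : ℤ) - M))⁻¹ : Circle))
            * ↑(∏ i, z i ^ ((g i : ℤ) - M)) ^ n := by
  simp_rw [four_pow_mul_raisedCosine_pow (Circle.coe_ne_zero _), prod_univ_sum]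
  refine Finset.sum_congr rfl fun g _ => ?_
  have hmono : ∀ i, ((z i ^ n / w i : Circle) : ℂ) ^ ((g i : ℤ) - M)
      = ↑((w i ^ ((g i : ℤ) - M))⁻¹ : Circle) * ↑(z i ^ ((g i : ℤ) - M)) ^ n := fun i => by
    rw [← Circle.coe_zpow, ← Circle.coe_pow, ← Circle.coe_mul, div_zpow, ← zpow_natCast,
      ← zpow_natCast, ← zpow_mul, ← zpow_mul, mul_comm (n : ℤ), div_eq_inv_mul]
  simp_rw [hmono, ← mul_assoc, prod_mul_distrib, prod_pow]
  congr 2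
  exact (map_prod Circle.coeHom (fun i => z i ^ ((g i : ℤ) - M)) univ).symm

lemma Circle.norm_div_sub_one (a b : Circle) : ‖((a / b : Circle) : ℂ) - 1‖ = ‖(a : ℂ) - b‖ := by
  rw [Circle.coe_div, ← div_self (Circle.coe_ne_zero b), ← sub_div, norm_div, Circle.norm_coe,
    div_one]

lemma tendsto_average_prod_four_pow_mul_raisedCosine_pow {ι : Type*} [Fintype ι]
    [DecidableEq ι] {z : ι → Circle} (hz : ∀ m : ι → ℤ, ∏ i, z i ^ m i = 1 → m = 0)
    (w : ι → Circle) (M : ℕ) :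
    Tendsto (fun N : ℕ => (∑ n ∈ range N, ∏ i, (4 ^ M * raisedCosine ↑(z i ^ n / w i) ^ M)) / N)
      atTop (𝓝 ((Nat.centralBinom M : ℂ) ^ Fintype.card ι)) := by
  simp only [prod_four_pow_mul_raisedCosine_pow]
  convert tendsto_average_sum_pow _ _ (fun g : ι → ℕ => ((∏ i, z i ^ ((g i : ℤ) - M) : Circle) : ℂ))
    fun g _ => Circle.norm_coe _ using 2
  rw [sum_filter, sum_eq_single_of_mem (fun _ => M) (by simp; omega)]
  · simp [Nat.centralBinom_eq_two_mul_choose]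
  · intro g _ hg
    rw [if_neg]
    intro hζ
    have := hz _ (Circle.coe_eq_one.1 hζ)
    exact hg (funext fun i => by simpa [sub_eq_zero] using congrFun this i)

theorem Circle.exists_forall_norm_pow_sub_lt {ι : Type*} [Fintype ι] {z : ι → Circle}
    (hz : ∀ m : ι → ℤ, ∏ i, z i ^ m i = 1 → m = 0) (w : ι → Circle) {ε : ℝ} (hε : 0 < ε) :
    ∃ n : ℕ, ∀ i, ‖(z i ^ n : ℂ) - w i‖ < ε := by
  classical
  by_contra! hfar
  set ρ := 1 - ε ^ 2 / 4
  -- any two points of the circle are at distance at most `2`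
  have hρ0 : 0 ≤ ρ := by
    obtain ⟨i, hi⟩ := hfar 0
    have : ‖(z i ^ 0 : ℂ) - w i‖ ≤ 2 := by
      rw [pow_zero]
      refine (norm_sub_le _ _).trans ?_
      rw [norm_one, Circle.norm_coe, one_add_one_eq_two]
    simp only [ρ]
    nlinarith
  obtain ⟨M, hM⟩ := exists_four_pow_mul_pow_lt_centralBinom_pow hρ0 (by simp [ρ, hε])
    (Fintype.card ι)
  have hkernel : ∀ n, ‖∏ i, (4 ^ M * raisedCosine ↑(z i ^ n / w i) ^ M)‖
      ≤ ((4 : ℝ) ^ M) ^ Fintype.card ι * ρ ^ M := fun n => by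
    obtain ⟨i, hi⟩ := hfar n
    rw [← Circle.coe_pow, ← Circle.norm_div_sub_one] at hi
    rw [prod_mul_distrib, prod_const, card_univ, norm_mul, norm_pow, norm_pow,
      Complex.norm_ofNat]
    gcongr
    exact norm_prod_raisedCosine_pow_le (fun i => z i ^ n / w i) hi hε.le M
  have hbound := le_of_tendsto'
    (tendsto_average_prod_four_pow_mul_raisedCosine_pow hz w M).norm
    fun N => norm_average_le (by positivity) hkernel N
  rw [norm_pow, Complex.norm_natCast] at hbound
  exact lt_irrefl _ (hbound.trans_lt hM)

lemma fourierChar_eq_one_iff {x : ℝ} : 𝐞 x = 1 ↔ ∃ j : ℤ, x = j := by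
  rw [Real.fourierChar_apply', Circle.exp_eq_one]
  refine exists_congr fun j => ⟨fun h => ?_, fun h => by rw [h]; ring⟩
  nlinarith [Real.pi_pos]

lemma fourierChar_sum {ι : Type*} (s : Finset ι) (f : ι → ℝ) :
    𝐞 (∑ i ∈ s, f i) = ∏ i ∈ s, 𝐞 (f i) := by
  have := map_prod 𝐞.toMonoidHom (fun i => Multiplicative.ofAdd (f i)) s
  rwa [← ofAdd_sum] at this

lemma four_mul_abs_sub_round_le_norm_fourierChar_sub_one (u : ℝ) :
    4 * |u - round u| ≤ ‖(𝐞 u : ℂ) - 1‖ := by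
  set v := u - round u
  have hv : π * |v| ≤ π / 2 := by nlinarith [abs_sub_round u, pi_pos]
  have hsin : |Real.sin (π * u)| = Real.sin (π * |v|) := by
    have : π * u = π * v + round u * π := by simp only [v]; ring
    rw [this, sin_add_int_mul_pi, abs_mul, abs_neg_one_zpow, one_mul,
      abs_sin_eq_sin_abs_of_abs_le_pi, abs_mul, abs_of_pos pi_pos]
    rw [abs_mul, abs_of_pos pi_pos]
    linarith [pi_pos]
  rw [Real.fourierChar_apply, mul_comm _ Complex.I, Complex.norm_exp_I_mul_ofReal_sub_one,
    norm_mul, Real.norm_eq_abs, Real.norm_eq_abs, abs_two, show 2 * π * u / 2 = π * u by ring,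
    hsin]
  have := Real.mul_le_sin (by positivity) hv
  rw [← mul_assoc, div_mul_cancel₀ _ pi_ne_zero] at this
  linarith

lemma abs_abs_sub_round_sub_abs_sub_round_le {α : Type*} [Ring α] [LinearOrder α]
    [IsStrictOrderedRing α] [FloorRing α] (x y : α) (j : ℤ) :
    |(|x - round x| - |y - round y|)| ≤ |x - y - j| := by
  have hx : |x - round x| ≤ |y - round y| + |x - y - j| :=
    calc |x - round x| ≤ |x - ↑(round y + j)| := round_le _ _
      _ = |(y - round y) + (x - y - j)| := by push_cast; congr 1; abel
      _ ≤ |y - round y| + |x - y - j| := abs_add_le _ _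
  have hy : |y - round y| ≤ |x - round x| + |x - y - j| :=
    calc |y - round y| ≤ |y - ↑(round x - j)| := round_le _ _
      _ = |(x - round x) - (x - y - j)| := by push_cast; congr 1; abel
      _ ≤ |x - round x| + |x - y - j| := abs_sub _ _
  exact abs_sub_le_iff.2 ⟨sub_le_iff_le_add'.2 hx, sub_le_iff_le_add'.2 hy⟩

lemma two_mul_abs_fract_sub_half {α : Type*} [Field α] [LinearOrder α] [IsStrictOrderedRing α]
    [FloorRing α] (x : α) : 2 * |Int.fract x - 1 / 2| = 1 - 2 * |x - round x| := by
  have h0 := Int.fract_nonneg x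
  have h1 := Int.fract_lt_one x
  rw [abs_sub_round_eq_min]
  rcases le_total (Int.fract x) (1 / 2) with h | h
  · rw [abs_of_nonpos (by linarith), min_eq_left (by linarith)]; ring
  · rw [abs_of_nonneg (by linarith), min_eq_right (by linarith)]; ring

lemma eq_zero_of_linearIndependent_cons_one {k : ℕ} {t : Fin k → ℝ}
    (hli : LinearIndependent ℚ (Fin.cons 1 t : Fin (k + 1) → ℝ)) (m : Fin k → ℤ) (j : ℤ)
    (h : ∑ i, (m i : ℝ) * t i = j) : m = 0 := by
  have hrel := Fintype.linearIndependent_iff.1 hli (Fin.cons (-(j : ℚ)) fun i => (m i : ℚ)) (by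
    rw [Fin.sum_univ_succ]
    simp only [Fin.cons_zero, Fin.cons_succ, Rat.smul_def]
    push_cast
    rw [h]
    ring)
  funext i
  simpa using hrel i.succ

theorem exists_forall_abs_nat_mul_sub_sub_round_lt {ι : Type*} [Fintype ι] {t : ι → ℝ}
    (ht : ∀ (m : ι → ℤ) (j : ℤ), ∑ i, (m i : ℝ) * t i = j → m = 0) (α : ι → ℝ) {δ : ℝ}
    (hδ : 0 < δ) : ∃ n : ℕ, ∀ i, |n * t i - α i - round (n * t i - α i)| < δ := by
  have hind : ∀ m : ι → ℤ, ∏ i, 𝐞 (t i) ^ m i = 1 → m = 0 := by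
    intro m hm
    refine (fourierChar_eq_one_iff.1 ?_).elim (ht m)
    simp_rw [fourierChar_sum, ← zsmul_eq_mul, AddChar.map_zsmul_eq_zpow, hm]
  obtain ⟨n, hn⟩ := Circle.exists_forall_norm_pow_sub_lt hind (fun i => 𝐞 (α i))
    (by positivity : 0 < 4 * δ)
  refine ⟨n, fun i => ?_⟩
  have he : 𝐞 (n * t i - α i) = 𝐞 (t i) ^ n / 𝐞 (α i) := by
    rw [AddChar.map_sub_eq_div, ← nsmul_eq_mul, AddChar.map_nsmul_eq_pow]
  have := four_mul_abs_sub_round_le_norm_fourierChar_sub_one (n * t i - α i)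
  rw [he, Circle.norm_div_sub_one, Circle.coe_pow] at this
  linarith [hn i]

theorem heights_with_base_general {k : ℕ} (t : Fin k → ℝ)
    (hli : LinearIndependent ℚ (Fin.cons 1 t : Fin (k + 1) → ℝ))
    (z₀ : ℝ) (hz₀ : z₀ ∈ Set.Ioo (0 : ℝ) 1) (φ : ℝ) (hφ : φ = 1 / 2 + z₀ / 2)
    (z : ℕ → ℝ → ℝ)
    (hz : ∀ n t', z n t' = 2 * |Int.fract ((n : ℝ) * t' + φ) - 1 / 2|) :
    (∀ n : ℕ, z n 0 = z₀) ∧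
    ∀ (h : Fin k → ℝ), (∀ i, h i ∈ Set.Ioo (0 : ℝ) 1) →
      ∀ ε > 0, ∃ n : ℕ, ∀ i, |z n (t i) - h i| < ε := by
  obtain ⟨hz₀0, hz₀1⟩ := hz₀
  refine ⟨fun n => ?_, fun h hh ε hε => ?_⟩
  · rw [hz, mul_zero, zero_add, Int.fract_eq_self.2 ⟨by linarith, by linarith⟩, hφ,
      abs_of_nonneg (by linarith)]
    ring
  -- `z n` is `x ↦ 1 - 2 ‖n x + φ‖`; aim `n tᵢ + φ` at `(1 + hᵢ) / 2`, where this equals `hᵢ`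
  obtain ⟨n, hn⟩ := exists_forall_abs_nat_mul_sub_sub_round_lt
    (eq_zero_of_linearIndependent_cons_one hli) (fun i => (1 + h i) / 2 - φ) (half_pos hε)
  refine ⟨n, fun i => ?_⟩
  obtain ⟨hh0, hh1⟩ := hh i
  have htarget : h i = 1 - 2 * |(1 + h i) / 2 - round ((1 + h i) / 2)| := by
    rw [← two_mul_abs_fract_sub_half, Int.fract_eq_self.2 ⟨by linarith, by linarith⟩,
      abs_of_nonneg (by linarith)]
    ring
  have hlip := abs_abs_sub_round_sub_abs_sub_round_le ((n : ℝ) * t i + φ) ((1 + h i) / 2)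
    (round ((n : ℝ) * t i - ((1 + h i) / 2 - φ)))
  rw [show (n : ℝ) * t i + φ - (1 + h i) / 2 = n * t i - ((1 + h i) / 2 - φ) by ring] at hlip
  rw [hz, two_mul_abs_fract_sub_half, htarget, abs_lt]
  rw [abs_le] at hlip
  constructor <;> linarith [hlip.1, hlip.2, hn i]

/-- With `φ = 1/2 + z₀/2` and `z_n(t) = 2|fract(n t + φ) - 1/2|`, one has
`z_n(0) = z₀` for all `n`, and if `1, t₁, …, t_k` are `ℚ`-linearly independent with
`t_i ∈ (0,1)`, the heights `z_n(t_i)` approximate any targets `h_i ∈ (0,1)`. -/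
theorem heights_with_base {k : ℕ} (t : Fin k → ℝ) (ht : ∀ i, t i ∈ Set.Ioo (0 : ℝ) 1)
    (hli : LinearIndependent ℚ (Fin.cons 1 t : Fin (k + 1) → ℝ))
    (z₀ : ℝ) (hz₀ : z₀ ∈ Set.Ioo (0 : ℝ) 1) (φ : ℝ) (hφ : φ = 1 / 2 + z₀ / 2)
    (z : ℕ → ℝ → ℝ)
    (hz : ∀ n t', z n t' = 2 * |Int.fract ((n : ℝ) * t' + φ) - 1 / 2|) :
    (∀ n : ℕ, z n 0 = z₀) ∧
    ∀ (h : Fin k → ℝ), (∀ i, h i ∈ Set.Ioo (0 : ℝ) 1) →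
      ∀ ε > 0, ∃ n : ℕ, ∀ i, |z n (t i) - h i| < ε :=
  heights_with_base_general t hli z₀ hz₀ φ hφ z hz
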